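/- Let h be a Leibniz algebra and Π(h) = {(D^L,D^R) ∈ Der^L(h)⊕Der^R(h) | D^Lα + D^Rα ∈ Δ(h) ∀α}. Then the complex h → Π(h), α ↦ (ad^L_α, ad^R_α), with l₂ given by the semidirect bracket on Π(h), l₂((D^L,D^R),α) = D^L α, l₂(α,(D^L,D^R)) = D^R α, and l₃ = 0, is a strict Leibniz 2-algebra. -/

import Mathlib

/-!
Conditions (a), (c), (d), (e₁), (e₂) are formal commutator identities in `End h`. The Leibniz
identity makes `Δ(h)` a space of left annihilators, and a right derivation kills every square;
since `D^L α + D^R α ∈ Δ(h)`, in (b) and (e₃) one may replace `D^R α` by `-D^L α`.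
-/

variable {K : Type*} [Field K] {h : Type*} [AddCommGroup h] [Module K h]

/-- `Δ(h) = span{[α,α]_h : α ∈ h}`. -/
def squaresSpan (B : h →ₗ[K] h →ₗ[K] h) : Submodule K h :=
  Submodule.span K {b : h | ∃ a : h, b = B a a}

/-- Membership in `Π(h)`: left derivation, right derivation, and
`DL α + DR α ∈ Δ(h)` for all `α`. -/
def InPi (B : h →ₗ[K] h →ₗ[K] h) (D : Module.End K h × Module.End K h) : Prop :=
  (∀ a b : h, D.1 (B a b) = B (D.1 a) b + B a (D.1 b)) ∧
  (∀ a b : h, D.2 (B a b) = B a (D.2 b) - B b (D.2 a)) ∧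
  (∀ α : h, D.1 α + D.2 α ∈ squaresSpan B)

/-- The semidirect bracket on pairs of endomorphisms. -/
def sBracket (D E : Module.End K h × Module.End K h) :
    Module.End K h × Module.End K h :=
  (⁅D.1, E.1⁆, ⁅D.1, E.2⁆)

section Bracket

variable (D E F : Module.End K h × Module.End K h) (α : h)

@[simp]
lemma sBracket_fst_apply : (sBracket D E).1 α = D.1 (E.1 α) - E.1 (D.1 α) := rfl

@[simp]
lemma sBracket_snd_apply : (sBracket D E).2 α = D.1 (E.2 α) - E.2 (D.1 α) := rfl

lemma sBracket_leibniz :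
    sBracket D (sBracket E F) = sBracket (sBracket D E) F + sBracket E (sBracket D F) := by
  let _ : LieRing (Module.End K h) := LieRing.ofAssociativeRing
  ext1
  exacts [LieRing.leibniz_lie D.1 E.1 F.1, LieRing.leibniz_lie D.1 E.1 F.2]

end Bracket

section Leibniz

variable (B : h →ₗ[K] h →ₗ[K] h)

lemma apply_add_flip_mem_squaresSpan (a b : h) : B a b + B b a ∈ squaresSpan B := by
  have polarize : B a b + B b a = B (a + b) (a + b) - B a a - B b b := by
    simp only [map_add, LinearMap.add_apply]
    abel
  rw [polarize]
  exact sub_mem (sub_mem (Submodule.subset_span ⟨a + b, rfl⟩) (Submodule.subset_span ⟨a, rfl⟩))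
    (Submodule.subset_span ⟨b, rfl⟩)

lemma squaresSpan_le_ker_of_rightDer {D : Module.End K h}
    (hD : ∀ a b : h, D (B a b) = B a (D b) - B b (D a)) :
    squaresSpan B ≤ LinearMap.ker D := by
  rw [squaresSpan, Submodule.span_le]
  rintro _ ⟨a, rfl⟩
  simp [hD a a]

variable {B}

lemma squaresSpan_le_ker (hleib : ∀ a b c : h, B a (B b c) = B (B a b) c + B b (B a c)) :
    squaresSpan B ≤ LinearMap.ker B := by
  rw [squaresSpan, Submodule.span_le]
  rintro _ ⟨a, rfl⟩
  ext b
  exact right_eq_add.mp (hleib a a b)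

lemma inPi_ad (hleib : ∀ a b c : h, B a (B b c) = B (B a b) c + B b (B a c)) (α : h) :
    InPi B (B α, B.flip α) := by
  refine ⟨hleib α, fun a b => ?_, apply_add_flip_mem_squaresSpan B α⟩
  simp only [LinearMap.flip_apply, hleib a b α]
  abel

lemma ad_fst_eq_sBracket {D : Module.End K h × Module.End K h}
    (hD : ∀ a b : h, D.1 (B a b) = B (D.1 a) b + B a (D.1 b)) (α : h) :
    ((B (D.1 α) : Module.End K h), (B.flip (D.1 α) : Module.End K h)) =
      sBracket D (B α, B.flip α) := by
  ext b
  · simp [hD α b]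
  · simp [hD b α]

lemma ad_snd_eq_sBracket (hleib : ∀ a b c : h, B a (B b c) = B (B a b) c + B b (B a c))
    {D : Module.End K h × Module.End K h} (hD : InPi B D) (α : h) :
    ((B (D.2 α) : Module.End K h), (B.flip (D.2 α) : Module.End K h)) =
      sBracket (B α, B.flip α) D := by
  have hann : B (D.1 α) + B (D.2 α) = 0 := by
    simpa using squaresSpan_le_ker hleib (hD.2.2 α)
  ext b
  · simp [hD.1 α b, eq_neg_of_add_eq_zero_right hann]
  · simp [hD.2.1 α b]

lemma sBracket_snd_apply_sub_sub {D E : Module.End K h × Module.End K h}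
    (hD : ∀ α : h, D.1 α + D.2 α ∈ squaresSpan B)
    (hE : ∀ a b : h, E.2 (B a b) = B a (E.2 b) - B b (E.2 a)) (α : h) :
    (sBracket D E).2 α - E.2 (D.2 α) - D.1 (E.2 α) = 0 := by
  have hkill : E.2 (D.1 α) + E.2 (D.2 α) = 0 := by
    simpa using squaresSpan_le_ker_of_rightDer B hE (hD α)
  rw [sBracket_snd_apply, eq_neg_of_add_eq_zero_right hkill]
  abel

end Leibniz

/-- Proposition 3.7: `(h, Π(h), d = (ad^L, ad^R), l₂, l₃ = 0)` is a strict
Leibniz 2-algebra, where `l₂` is the semidirect bracket on `Π(h)`,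
`l₂(D, α) = D^L α` and `l₂(α, D) = D^R α`.  The conclusions list: `d` lands in
`Π(h)`; conditions (a), (b), (c); the Leibniz identity for `l₂` on `Π(h)`
(condition (d) with `l₃ = 0`); and conditions (e₁), (e₂), (e₃) with `l₃ = 0`. -/
theorem Pi_strict_leibniz2
    (B : h →ₗ[K] h →ₗ[K] h)
    (hleib : ∀ a b c : h, B a (B b c) = B (B a b) c + B b (B a c)) :
    -- the differential α ↦ (ad^L_α, ad^R_α) lands in Π(h)
    (∀ α : h, InPi B (B α, B.flip α)) ∧
    -- (a): d l₂(D, α) = l₂(D, d α)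
    (∀ D : Module.End K h × Module.End K h, InPi B D → ∀ α : h,
      ((B (D.1 α) : Module.End K h), (B.flip (D.1 α) : Module.End K h)) =
        sBracket D (B α, B.flip α)) ∧
    -- (b): d l₂(α, D) = l₂(d α, D)
    (∀ D : Module.End K h × Module.End K h, InPi B D → ∀ α : h,
      ((B (D.2 α) : Module.End K h), (B.flip (D.2 α) : Module.End K h)) =
        sBracket (B α, B.flip α) D) ∧
    -- (c): l₂(d α, β) = l₂(α, d β)
    (∀ α β : h, (B α) β = (B.flip β) α) ∧
    -- (d) with l₃ = 0: the Leibniz identity for the bracket on Π(h)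
    (∀ D E F : Module.End K h × Module.End K h,
      InPi B D → InPi B E → InPi B F →
      sBracket D (sBracket E F) =
        sBracket (sBracket D E) F + sBracket E (sBracket D F)) ∧
    -- (e₁): l₂(D, l₂(E, α)) - l₂(l₂(D,E), α) - l₂(E, l₂(D, α)) = 0
    (∀ D E : Module.End K h × Module.End K h, InPi B D → InPi B E → ∀ α : h,
      D.1 (E.1 α) - (sBracket D E).1 α - E.1 (D.1 α) = 0) ∧
    -- (e₂): l₂(D, l₂(α, E)) - l₂(l₂(D, α), E) - l₂(α, l₂(D, E)) = 0
    (∀ D E : Module.End K h × Module.End K h, InPi B D → InPi B E → ∀ α : h,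
      D.1 (E.2 α) - E.2 (D.1 α) - (sBracket D E).2 α = 0) ∧
    -- (e₃): l₂(α, l₂(D, E)) - l₂(l₂(α, D), E) - l₂(D, l₂(α, E)) = 0
    (∀ D E : Module.End K h × Module.End K h, InPi B D → InPi B E → ∀ α : h,
      (sBracket D E).2 α - E.2 (D.2 α) - D.1 (E.2 α) = 0) := by
  refine ⟨inPi_ad hleib, fun D hD => ad_fst_eq_sBracket hD.1,
    fun D hD => ad_snd_eq_sBracket hleib hD, fun _ _ => rfl, fun D E F _ _ _ => sBracket_leibniz D E F, ?_, ?_,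
    fun D E hD hE => sBracket_snd_apply_sub_sub hD.2.2 hE.2.1⟩
  · intro D E _ _ α
    simp only [sBracket_fst_apply]
    abel
  · intro D E _ _ α
    simp only [sBracket_snd_apply]
    abel
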